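/- For Ω = k_{ij} Ψ^i ∧ Θ^j on the IP Lie algebroid, one has: δΩ(Γ₀, W_i, W_j) = k_{ij} − k_{ji}; δΩ(Γ₀, W_i, H_j) = γ(k_{ij}) − k_{kj}λ_i^k − k_{ik}λ_j^k; δΩ(Γ₀, H_i, H_j) = k_{ki}φ_j^k − k_{kj}φ_i^k; and δΩ(W_i, W_j, H_k) = ∂k_{jk}/∂w^i − ∂k_{ik}/∂w^j. Hence δΩ = 0 on these triples if and only if (k_{ij}) satisfies the reduced Helmholtz conditions except non-degeneracy. -/

import Mathlib

open scoped BigOperators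

noncomputable section

namespace IP

/-- Functions on `M = ℝ × 𝔤 ≃ ℝ × ℝⁿ`, coordinates `(t, w)`. -/
abbrev F (n : ℕ) := ℝ × (Fin n → ℝ) → ℝ

/-- `∂f/∂t`. -/
def Dt {n : ℕ} (f : F n) (z : ℝ × (Fin n → ℝ)) : ℝ := fderiv ℝ f z (1, 0)

/-- `∂f/∂w^i`. -/
def Dw {n : ℕ} (i : Fin n) (f : F n) (z : ℝ × (Fin n → ℝ)) : ℝ :=
  fderiv ℝ f z (0, Pi.single i 1)

/-- Sections of the IP Lie algebroid
`A = ℝ × 𝔤 × ℝ × 𝔤 × 𝔤 → M = ℝ × 𝔤`: coefficients `(b, ξ, η)` with respect to the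
basis of sections `(T₀, e_i, W_i)`. -/
abbrev Sec (n : ℕ) := F n × (Fin n → F n) × (Fin n → F n)

/-- The anchor of the IP Lie algebroid, `ρ(T₀) = ∂/∂t`,
`ρ(e_i) = w^k C_{ki}^j ∂/∂w^j`, `ρ(W_i) = ∂/∂w^i`, as a differential operator;
`C` are the structure constants of `𝔤`. -/
def Dop {n : ℕ} (C : Fin n → Fin n → Fin n → ℝ) (X : Sec n) (f : F n) : F n :=
  fun z =>
    X.1 z * Dt f z
      + (∑ j, X.2.1 j z * ∑ k, ∑ l, z.2 k * C k j l * Dw l f z)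
      + ∑ i, X.2.2 i z * Dw i f z

/-- The bracket of the IP Lie algebroid, the Leibniz extension of
`⟦T₀,e_i⟧ = ⟦T₀,W_i⟧ = 0`, `⟦e_i,e_j⟧ = C_{ij}^k e_k`, `⟦e_i,W_j⟧ = C_{ij}^k W_k`,
`⟦W_i,W_j⟧ = 0`. -/
def br {n : ℕ} (C : Fin n → Fin n → Fin n → ℝ) (X Y : Sec n) : Sec n :=
  (fun z => Dop C X Y.1 z - Dop C Y X.1 z,
   fun l => fun z => Dop C X (Y.2.1 l) z - Dop C Y (X.2.1 l) z
     + ∑ i, ∑ j, C i j l * X.2.1 i z * Y.2.1 j z,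
   fun l => fun z => Dop C X (Y.2.2 l) z - Dop C Y (X.2.2 l) z
     + ∑ i, ∑ j, C i j l * (X.2.1 i z * Y.2.2 j z - Y.2.1 i z * X.2.2 j z))

/-- The basis section `W_i`. -/
def W {n : ℕ} (i : Fin n) : Sec n :=
  (fun _ => 0, fun _ => fun _ => 0, fun j => fun _ => if j = i then 1 else 0)

/-- The section `Γ₀ = T₀ + w^j e_j + γ^j W_j`. -/
def Γ0 {n : ℕ} (γ : Fin n → F n) : Sec n :=
  (fun _ => 1, fun j => fun z => z.2 j, fun j => γ j)

/-- `λ_i^j = (1/2)(w^k C_{ki}^j − ∂γ^j/∂w^i)`. -/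
def lam {n : ℕ} (C : Fin n → Fin n → Fin n → ℝ) (γ : Fin n → F n)
    (i j : Fin n) : F n := fun z =>
  (1 / 2) * ((∑ k, z.2 k * C k i j) - Dw i (γ j) z)

/-- The section `H_i = e_i − λ_i^j W_j`. -/
def Hs {n : ℕ} (C : Fin n → Fin n → Fin n → ℝ) (γ : Fin n → F n) (i : Fin n) :
    Sec n :=
  (fun _ => 0, fun j => fun _ => if j = i then 1 else 0,
   fun j => fun z => - lam C γ i j z)

/-- The reduced vector field `γ = ∂/∂t + γ^i ∂/∂w^i` acting on a function. -/
def gamD {n : ℕ} (γ : Fin n → F n) (f : F n) : F n := fun z =>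
  Dt f z + ∑ l, γ l z * Dw l f z

/-- `φ_i^j = −w^k C_{ki}^l ∂γ^j/∂w^l − γ^k C_{ik}^j − γ(λ_i^j) − λ_i^k λ_k^j`. -/
def phi {n : ℕ} (C : Fin n → Fin n → Fin n → ℝ) (γ : Fin n → F n)
    (i j : Fin n) : F n := fun z =>
  -(∑ k, ∑ l, z.2 k * C k i l * Dw l (γ j) z) - (∑ k, γ k z * C i k j)
    - gamD γ (lam C γ i j) z - ∑ k, lam C γ i k z * lam C γ k j z

/-- `λ_{ij}^k = ∂λ_i^k/∂w^j`. -/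
def lamd {n : ℕ} (C : Fin n → Fin n → Fin n → ℝ) (γ : Fin n → F n)
    (i j k : Fin n) : F n := fun z => Dw j (lam C γ i k) z

/-- `r_{ij}^k`. -/
def rr {n : ℕ} (C : Fin n → Fin n → Fin n → ℝ) (γ : Fin n → F n)
    (i j k : Fin n) : F n := fun z =>
  ((∑ l, ∑ m, z.2 l * C l j m * lamd C γ i m k z)
      - (∑ l, ∑ m, z.2 l * C l i m * lamd C γ j m k z)
      + ∑ l, (lam C γ i l z * lamd C γ j l k z - lam C γ j l z * lamd C γ i l k z))
    + (∑ l, C i j l * lam C γ l k z)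
    + ∑ l, (lam C γ i l z * C j l k - lam C γ j l z * C i l k)

/-- Multiplication of a section by a function. -/
def smulS {n : ℕ} (f : F n) (X : Sec n) : Sec n :=
  (fun z => f z * X.1 z, fun j => fun z => f z * X.2.1 j z,
   fun j => fun z => f z * X.2.2 j z)

end IP

end

namespace IP

/-- The 1-form `Ψ^i = W^i − γ^i T^0 + λ_j^i Θ^j` (dual basis to `{Γ₀, H_i, W_i}`),
evaluated on a section `X = b T₀ + ξ^j e_j + η^j W_j`. -/
noncomputable def Psi {n : ℕ} (C : Fin n → Fin n → Fin n → ℝ) (γ : Fin n → F n)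
    (i : Fin n) (X : Sec n) : F n := fun z =>
  X.2.2 i z - γ i z * X.1 z + ∑ j, lam C γ j i z * (X.2.1 j z - z.2 j * X.1 z)

/-- The 1-form `Θ^i = e^i − w^i T^0`, evaluated on a section. -/
noncomputable def Th {n : ℕ} (i : Fin n) (X : Sec n) : F n := fun z =>
  X.2.1 i z - z.2 i * X.1 z

/-- The Koszul formula for the exterior derivative of a 2-form `ω` on the IP Lie
algebroid, `δω(X,Y,Z) = ∑_cyclic ρ(X)(ω(Y,Z)) − ω(⟦X,Y⟧, Z)`. -/
noncomputable def d2 {n : ℕ} (C : Fin n → Fin n → Fin n → ℝ) (ω : Sec n → Sec n → F n)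
    (X Y Z : Sec n) : F n := fun z =>
  Dop C X (ω Y Z) z - Dop C Y (ω X Z) z + Dop C Z (ω X Y) z
    - ω (br C X Y) Z z + ω (br C X Z) Y z - ω (br C Y Z) X z

end IP

open IP
open scoped BigOperators

/-- The 2-form `Ω = k_{ij} Ψ^i ∧ Θ^j` on the IP Lie algebroid. -/
noncomputable def Om {n : ℕ} (C : Fin n → Fin n → Fin n → ℝ) (γ : Fin n → F n)
    (kc : Fin n → Fin n → F n) (X Y : Sec n) : F n := fun z =>
  ∑ i, ∑ j, kc i j z * (Psi C γ i X z * Th j Y z - Psi C γ i Y z * Th j X z)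

open IP
open scoped BigOperators

variable {n : ℕ}

lemma Dt_const (c : ℝ) (z : ℝ × (Fin n → ℝ)) : Dt (fun _ => c) z = 0 := by
  simp [Dt]

lemma Dw_const (i : Fin n) (c : ℝ) (z : ℝ × (Fin n → ℝ)) :
    Dw i (fun _ => c) z = 0 := by simp [Dw]

lemma Dt_neg (f : F n) (z : ℝ × (Fin n → ℝ)) :
    Dt (fun w => -f w) z = -Dt f z := by simp [Dt, fderiv_neg]

lemma Dw_neg (i : Fin n) (f : F n) (z : ℝ × (Fin n → ℝ)) :
    Dw i (fun w => -f w) z = -Dw i f z := by simp [Dw, fderiv_neg]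

lemma Dt_coord (l : Fin n) (z : ℝ × (Fin n → ℝ)) :
    Dt (fun w : ℝ × (Fin n → ℝ) => w.2 l) z = 0 := by
  have h : (fun w : ℝ × (Fin n → ℝ) => w.2 l)
      = ⇑((ContinuousLinearMap.proj l).comp
          (ContinuousLinearMap.snd ℝ ℝ (Fin n → ℝ))) := rfl
  rw [Dt, h, ContinuousLinearMap.fderiv]
  simp

lemma Dw_coord (i l : Fin n) (z : ℝ × (Fin n → ℝ)) :
    Dw i (fun w : ℝ × (Fin n → ℝ) => w.2 l) z = if l = i then 1 else 0 := by
  have h : (fun w : ℝ × (Fin n → ℝ) => w.2 l)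
      = ⇑((ContinuousLinearMap.proj l).comp
          (ContinuousLinearMap.snd ℝ ℝ (Fin n → ℝ))) := rfl
  rw [Dw, h, ContinuousLinearMap.fderiv]
  simp [Pi.single_apply]
variable (C : Fin n → Fin n → Fin n → ℝ) (γ : Fin n → F n)

lemma Dop_zero (X : Sec n) (z : ℝ × (Fin n → ℝ)) :
    Dop C X (fun _ => (0:ℝ)) z = 0 := by
  simp [Dop, Dt_const, Dw_const]

lemma Dop_constfun (X : Sec n) (c : ℝ) (z : ℝ × (Fin n → ℝ)) :
    Dop C X (fun _ => c) z = 0 := by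
  simp [Dop, Dt_const, Dw_const]

lemma Dop_W (i : Fin n) (f : F n) (z : ℝ × (Fin n → ℝ)) :
    Dop C (W i) f z = Dw i f z := by
  simp [Dop, W, ite_mul, Finset.sum_ite_eq']

lemma skew_cancel (hCskew : ∀ i j l, C i j l = - C j i l)
    (w d : Fin n → ℝ) :
    (∑ j, w j * ∑ k, ∑ l, w k * C k j l * d l) = 0 := by
  have h : (∑ j, w j * ∑ k, ∑ l, w k * C k j l * d l)
      = ∑ j, ∑ k, ∑ l, w j * (w k * C k j l * d l) := by
    simp [Finset.mul_sum]
  have h2 : (∑ j, ∑ k, ∑ l, w j * (w k * C k j l * d l))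
      = ∑ k, ∑ j, ∑ l, w j * (w k * C k j l * d l) := Finset.sum_comm
  have h3 : (∑ k, ∑ j, ∑ l, w j * (w k * C k j l * d l))
      = -∑ j, ∑ k, ∑ l, w j * (w k * C k j l * d l) := by
    rw [← Finset.sum_neg_distrib]
    refine Finset.sum_congr rfl fun k _ => ?_
    rw [← Finset.sum_neg_distrib]
    refine Finset.sum_congr rfl fun j _ => ?_
    rw [← Finset.sum_neg_distrib]
    refine Finset.sum_congr rfl fun l _ => ?_
    rw [hCskew k j l]; ring
  rw [h]
  have h4 := h2.trans h3
  linarith [h4]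

lemma Dop_G0 (hCskew : ∀ i j l, C i j l = - C j i l) (f : F n)
    (z : ℝ × (Fin n → ℝ)) :
    Dop C (Γ0 γ) f z = gamD γ f z := by
  simp only [Dop, Γ0, gamD, one_mul]
  rw [skew_cancel C hCskew z.2 (fun l => Dw l f z)]
  ring

lemma Dop_Hs (k : Fin n) (f : F n) (z : ℝ × (Fin n → ℝ)) :
    Dop C (Hs C γ k) f z
      = (∑ m, ∑ p, z.2 m * C m k p * Dw p f z)
        - ∑ p, lam C γ k p z * Dw p f z := by
  simp [Hs, Dop, ite_mul, Finset.sum_ite_eq', neg_mul, Finset.sum_neg_distrib]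
  ring
variable (kc : Fin n → Fin n → F n)

lemma Th_G0 (b : Fin n) (z : ℝ × (Fin n → ℝ)) : Th b (Γ0 γ) z = 0 := by
  simp [Th, Γ0]

lemma Psi_G0 (a : Fin n) (z : ℝ × (Fin n → ℝ)) : Psi C γ a (Γ0 γ) z = 0 := by
  simp [Psi, Γ0]

lemma Th_W (b i : Fin n) (z : ℝ × (Fin n → ℝ)) : Th b (W i) z = 0 := by
  simp [Th, W]

lemma Psi_W (a i : Fin n) (z : ℝ × (Fin n → ℝ)) :
    Psi C γ a (W i) z = if a = i then 1 else 0 := by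
  simp [Psi, W]

lemma Th_Hs (b k : Fin n) (z : ℝ × (Fin n → ℝ)) :
    Th b (Hs C γ k) z = if b = k then 1 else 0 := by
  simp [Th, Hs]

lemma Psi_Hs (a k : Fin n) (z : ℝ × (Fin n → ℝ)) :
    Psi C γ a (Hs C γ k) z = 0 := by
  simp [Psi, Hs, mul_ite, mul_one, mul_zero, Finset.sum_ite_eq']

lemma Om_G0_left (Y : Sec n) : Om C γ kc (Γ0 γ) Y = fun _ => 0 := by
  funext z; simp [Om, Psi_G0, Th_G0]

lemma Om_right_G0 (X : Sec n) : Om C γ kc X (Γ0 γ) = fun _ => 0 := by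
  funext z; simp [Om, Psi_G0, Th_G0]

lemma Om_G0_right_pt (X : Sec n) (z : ℝ × (Fin n → ℝ)) :
    Om C γ kc X (Γ0 γ) z = 0 := by
  simp [Om, Psi_G0, Th_G0]

lemma Om_W_W (i j : Fin n) : Om C γ kc (W i) (W j) = fun _ => 0 := by
  funext z; simp [Om, Th_W]

lemma Om_W_Hs (i k : Fin n) : Om C γ kc (W i) (Hs C γ k) = kc i k := by
  funext z
  simp [Om, Psi_W, Th_Hs, Psi_Hs, Th_W, mul_ite, ite_mul, mul_one, mul_zero,
    zero_mul, Finset.sum_ite_eq', Finset.sum_ite_eq]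

lemma Om_X_W (X : Sec n) (j : Fin n) (z : ℝ × (Fin n → ℝ)) :
    Om C γ kc X (W j) z = -∑ b, kc j b z * Th b X z := by
  simp only [Om, Th_W, Psi_W, mul_zero, zero_sub, ite_mul, one_mul, zero_mul,
    mul_neg, Finset.sum_neg_distrib]
  congr 1
  rw [Finset.sum_comm]
  refine Finset.sum_congr rfl fun b _ => ?_
  simp [Finset.sum_ite_eq, mul_ite, ite_mul]

lemma Om_X_Hs (X : Sec n) (k : Fin n) (z : ℝ × (Fin n → ℝ)) :
    Om C γ kc X (Hs C γ k) z = ∑ a, kc a k z * Psi C γ a X z := by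
  simp only [Om, Th_Hs, Psi_Hs, zero_mul, sub_zero, mul_ite, mul_one, mul_zero]
  refine Finset.sum_congr rfl fun a _ => ?_
  simp [Finset.sum_ite_eq', mul_ite, mul_zero]
lemma brGW_fst (i : Fin n) (z : ℝ × (Fin n → ℝ)) :
    (br C (Γ0 γ) (W i)).1 z = 0 := by
  simp only [br]
  rw [show ((W i : Sec n).1) = (fun _ => (0:ℝ)) from rfl,
    show ((Γ0 γ : Sec n).1) = (fun _ => (1:ℝ)) from rfl,
    Dop_zero, Dop_constfun]
  ring

lemma brGW_xi (i l : Fin n) (z : ℝ × (Fin n → ℝ)) :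
    (br C (Γ0 γ) (W i)).2.1 l z = -(if l = i then 1 else 0) := by
  simp only [br]
  rw [Dop_W, show ((W i : Sec n).2.1 l) = (fun _ => (0:ℝ)) from rfl,
    show ((Γ0 γ : Sec n).2.1 l) = (fun w : ℝ × (Fin n → ℝ) => w.2 l) from rfl,
    Dop_zero, Dw_coord]
  simp [W]

lemma brGW_eta (i l : Fin n) (z : ℝ × (Fin n → ℝ)) :
    (br C (Γ0 γ) (W i)).2.2 l z = 2 * lam C γ i l z := by
  simp only [br]
  rw [Dop_W, show ((W i : Sec n).2.2 l) = (fun _ => if l = i then (1:ℝ) else 0)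
      from rfl,
    show ((Γ0 γ : Sec n).2.2 l) = γ l from rfl, Dop_constfun]
  simp only [Γ0, W, mul_ite, mul_one, mul_zero, zero_mul, sub_zero, zero_add,
    zero_sub, mul_sub]
  rw [Finset.sum_congr rfl (fun a (_ : a ∈ Finset.univ) =>
    Finset.sum_ite_eq' Finset.univ i (fun b => C a b l * z.2 a))]
  simp only [Finset.mem_univ, if_true, lam]
  rw [Finset.sum_congr rfl (fun a (_ : a ∈ Finset.univ) =>
    show C a i l * z.2 a = z.2 a * C a i l from mul_comm _ _)]
  ring
lemma Th_brGW (b i : Fin n) (z : ℝ × (Fin n → ℝ)) :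
    Th b (br C (Γ0 γ) (W i)) z = -(if b = i then 1 else 0) := by
  rw [Th, brGW_fst, brGW_xi]
  ring

lemma Psi_brGW (a i : Fin n) (z : ℝ × (Fin n → ℝ)) :
    Psi C γ a (br C (Γ0 γ) (W i)) z = lam C γ i a z := by
  rw [Psi, brGW_fst, brGW_eta]
  simp only [mul_zero, sub_zero]
  rw [Finset.sum_congr rfl (fun x (_ : x ∈ Finset.univ) => by
    rw [brGW_xi] :
    ∀ x ∈ Finset.univ, lam C γ x a z * (br C (Γ0 γ) (W i)).2.1 x z
      = lam C γ x a z * (-(if x = i then 1 else 0)))]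
  simp [mul_ite, Finset.sum_ite_eq']
  ring

lemma brWW_fst (i j : Fin n) (z : ℝ × (Fin n → ℝ)) :
    (br C (W i) (W j)).1 z = 0 := by
  simp only [br]
  rw [show ((W i : Sec n).1) = (fun _ => (0:ℝ)) from rfl,
    show ((W j : Sec n).1) = (fun _ => (0:ℝ)) from rfl, Dop_zero, Dop_zero]
  simp

lemma brWW_xi (i j l : Fin n) (z : ℝ × (Fin n → ℝ)) :
    (br C (W i) (W j)).2.1 l z = 0 := by
  simp only [br]
  rw [show ((W i : Sec n).2.1 l) = (fun _ => (0:ℝ)) from rfl,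
    show ((W j : Sec n).2.1 l) = (fun _ => (0:ℝ)) from rfl, Dop_zero, Dop_zero]
  simp [W]

lemma brWW_eta (i j l : Fin n) (z : ℝ × (Fin n → ℝ)) :
    (br C (W i) (W j)).2.2 l z = 0 := by
  simp only [br]
  rw [show ((W i : Sec n).2.2 l) = (fun _ => if l = i then (1:ℝ) else 0)
      from rfl,
    show ((W j : Sec n).2.2 l) = (fun _ => if l = j then (1:ℝ) else 0)
      from rfl, Dop_constfun, Dop_constfun]
  simp [W]

lemma Th_brWW (b i j : Fin n) (z : ℝ × (Fin n → ℝ)) :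
    Th b (br C (W i) (W j)) z = 0 := by
  rw [Th, brWW_fst, brWW_xi]; ring

lemma Psi_brWW (a i j : Fin n) (z : ℝ × (Fin n → ℝ)) :
    Psi C γ a (br C (W i) (W j)) z = 0 := by
  rw [Psi, brWW_fst, brWW_eta]
  rw [Finset.sum_congr rfl (fun b (_ : b ∈ Finset.univ) => by
    rw [brWW_xi] :
    ∀ b ∈ Finset.univ, lam C γ b a z * ((br C (W i) (W j)).2.1 b z
      - z.2 b * 0)
      = lam C γ b a z * ((0:ℝ) - z.2 b * 0))]
  simp

lemma brWH_fst (i k : Fin n) (z : ℝ × (Fin n → ℝ)) :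
    (br C (W i) (Hs C γ k)).1 z = 0 := by
  simp only [br]
  rw [show ((W i : Sec n).1) = (fun _ => (0:ℝ)) from rfl,
    show ((Hs C γ k : Sec n).1) = (fun _ => (0:ℝ)) from rfl, Dop_zero, Dop_zero]
  simp

lemma brWH_xi (i k l : Fin n) (z : ℝ × (Fin n → ℝ)) :
    (br C (W i) (Hs C γ k)).2.1 l z = 0 := by
  simp only [br]
  rw [show ((W i : Sec n).2.1 l) = (fun _ => (0:ℝ)) from rfl,
    show ((Hs C γ k : Sec n).2.1 l) = (fun _ => if l = k then (1:ℝ) else 0)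
      from rfl, Dop_zero, Dop_constfun]
  simp [W]

lemma Th_brWH (b i k : Fin n) (z : ℝ × (Fin n → ℝ)) :
    Th b (br C (W i) (Hs C γ k)) z = 0 := by
  rw [Th, brWH_fst, brWH_xi]; ring
lemma gamD_neg (f : F n) (z : ℝ × (Fin n → ℝ)) :
    gamD γ (fun w => -f w) z = -gamD γ f z := by
  simp [gamD, Dt_neg, Dw_neg, Finset.sum_neg_distrib, mul_neg]
  ring

lemma brGH_fst (j : Fin n) (z : ℝ × (Fin n → ℝ)) :
    (br C (Γ0 γ) (Hs C γ j)).1 z = 0 := by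
  simp only [br]
  rw [show ((Hs C γ j : Sec n).1) = (fun _ => (0:ℝ)) from rfl,
    show ((Γ0 γ : Sec n).1) = (fun _ => (1:ℝ)) from rfl,
    Dop_zero, Dop_constfun]
  ring

lemma brGH_xi (hCskew : ∀ i j l, C i j l = - C j i l) (j l : Fin n)
    (z : ℝ × (Fin n → ℝ)) :
    (br C (Γ0 γ) (Hs C γ j)).2.1 l z = lam C γ j l z := by
  simp only [br]
  rw [show ((Hs C γ j : Sec n).2.1 l) = (fun _ => if l = j then (1:ℝ) else 0)
      from rfl,
    show ((Γ0 γ : Sec n).2.1 l) = (fun w : ℝ × (Fin n → ℝ) => w.2 l) from rfl,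
    Dop_constfun, Dop_Hs]
  simp only [Γ0, Hs, Dw_coord, mul_ite, mul_one, mul_zero, ite_mul, one_mul,
    zero_mul, Finset.sum_ite_eq', Finset.sum_ite_eq, Finset.mem_univ, if_true,
    zero_sub]
  rw [Finset.sum_congr rfl (fun a (_ : a ∈ Finset.univ) =>
    show C a j l * z.2 a = z.2 a * C a j l from mul_comm _ _)]
  ring

lemma brGH_eta (hCskew : ∀ i j l, C i j l = - C j i l) (j l : Fin n)
    (z : ℝ × (Fin n → ℝ)) :
    (br C (Γ0 γ) (Hs C γ j)).2.2 l z
      = -gamD γ (lam C γ j l) z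
        - ((∑ m, ∑ p, z.2 m * C m j p * Dw p (γ l) z)
            - ∑ p, lam C γ j p z * Dw p (γ l) z)
        + (-(∑ a, ∑ b, C a b l * z.2 a * lam C γ j b z)
            - ∑ b, C j b l * γ b z) := by
  simp only [br]
  rw [show ((Hs C γ j : Sec n).2.2 l) = (fun w => -lam C γ j l w) from rfl,
    show ((Γ0 γ : Sec n).2.2 l) = γ l from rfl,
    Dop_G0 C γ hCskew, gamD_neg, Dop_Hs]
  simp only [Γ0, Hs, mul_neg, ite_mul, one_mul, zero_mul, mul_ite, mul_one,
    mul_zero]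
  congr 1
  have h1 : ∀ x x1 : Fin n,
      C x x1 l * (-(z.2 x * lam C γ j x1 z) - if x = j then γ x1 z else 0)
        = -(C x x1 l * z.2 x * lam C γ j x1 z)
          - (if x = j then C x x1 l * γ x1 z else 0) := by
    intro x x1; split <;> ring
  have h2 : ∀ x : Fin n,
      (∑ x1, if x = j then C x x1 l * γ x1 z else 0)
        = if x = j then ∑ x1, C x x1 l * γ x1 z else 0 := by
    intro x; split <;> simp
  calc ∑ x, ∑ x1, C x x1 l
        * (-(z.2 x * lam C γ j x1 z) - if x = j then γ x1 z else 0)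
      = ∑ x, ∑ x1, (-(C x x1 l * z.2 x * lam C γ j x1 z)
          - (if x = j then C x x1 l * γ x1 z else 0)) :=
        Finset.sum_congr rfl fun x _ => Finset.sum_congr rfl fun x1 _ =>
          h1 x x1
    _ = (∑ x, ∑ x1, -(C x x1 l * z.2 x * lam C γ j x1 z))
          - ∑ x, ∑ x1, (if x = j then C x x1 l * γ x1 z else 0) := by
        rw [← Finset.sum_sub_distrib]
        exact Finset.sum_congr rfl fun x _ => Finset.sum_sub_distrib _ _
    _ = -(∑ a, ∑ b, C a b l * z.2 a * lam C γ j b z)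
          - ∑ b, C j b l * γ b z := by
        congr 1
        · rw [← Finset.sum_neg_distrib]
          exact Finset.sum_congr rfl fun a _ => Finset.sum_neg_distrib _
        · rw [Finset.sum_congr rfl fun x _ => h2 x,
            Finset.sum_ite_eq' Finset.univ j
              (fun x => ∑ x1, C x x1 l * γ x1 z)]
          simp
lemma Th_brGH (hCskew : ∀ i j l, C i j l = - C j i l) (b j : Fin n)
    (z : ℝ × (Fin n → ℝ)) :
    Th b (br C (Γ0 γ) (Hs C γ j)) z = lam C γ j b z := by
  rw [Th, brGH_fst, brGH_xi C γ hCskew]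
  ring

lemma Psi_brGH (hCskew : ∀ i j l, C i j l = - C j i l) (a j : Fin n)
    (z : ℝ × (Fin n → ℝ)) :
    Psi C γ a (br C (Γ0 γ) (Hs C γ j)) z = phi C γ j a z := by
  rw [Psi, brGH_fst, brGH_eta C γ hCskew j a]
  rw [Finset.sum_congr rfl (fun b (_ : b ∈ Finset.univ) => by
    rw [brGH_xi C γ hCskew j b] :
    ∀ b ∈ Finset.univ,
      lam C γ b a z * ((br C (Γ0 γ) (Hs C γ j)).2.1 b z - z.2 b * 0)
        = lam C γ b a z * (lam C γ j b z - z.2 b * 0))]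
  simp only [mul_zero, sub_zero, zero_mul]
  have hdw : ∀ p, Dw p (γ a) z
      = (∑ m, z.2 m * C m p a) - 2 * lam C γ p a z := by
    intro p; simp only [lam]; ring
  have hS2 : (∑ p, lam C γ j p z * Dw p (γ a) z)
      = (∑ p, lam C γ j p z * ∑ m, z.2 m * C m p a)
        - 2 * ∑ p, lam C γ j p z * lam C γ p a z := by
    have hterm : ∀ p, lam C γ j p z * Dw p (γ a) z
        = lam C γ j p z * (∑ m, z.2 m * C m p a)
          - 2 * (lam C γ j p z * lam C γ p a z) := fun p => by
      rw [hdw p]; ring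
    rw [Finset.sum_congr rfl fun p _ => hterm p, Finset.sum_sub_distrib,
      ← Finset.mul_sum]
  have hS3 : (∑ x, ∑ x1, C x x1 a * z.2 x * lam C γ j x1 z)
      = ∑ p, lam C γ j p z * ∑ m, z.2 m * C m p a := by
    rw [Finset.sum_comm]
    refine Finset.sum_congr rfl fun p _ => ?_
    rw [Finset.mul_sum]
    refine Finset.sum_congr rfl fun m _ => ?_
    ring
  have hS4 : (∑ b, C j b a * γ b z) = ∑ k, γ k z * C j k a :=
    Finset.sum_congr rfl fun k _ => mul_comm _ _
  have hS5 : (∑ b, lam C γ b a z * lam C γ j b z)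
      = ∑ k, lam C γ j k z * lam C γ k a z :=
    Finset.sum_congr rfl fun k _ => mul_comm _ _
  rw [hS2, hS3, hS4, hS5, phi]
  ring
lemma Om_Hs_Hs (i j : Fin n) :
    Om C γ kc (Hs C γ i) (Hs C γ j) = fun _ => 0 := by
  funext z; simp [Om, Psi_Hs]

/-- For `Ω = k_{ij} Ψ^i ∧ Θ^j` on the IP Lie algebroid, one has:
`δΩ(Γ₀, W_i, W_j) = k_{ij} − k_{ji}`;
`δΩ(Γ₀, W_i, H_j) = γ(k_{ij}) − k_{kj}λ_i^k − k_{ik}λ_j^k`;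
`δΩ(Γ₀, H_i, H_j) = k_{ki}φ_j^k − k_{kj}φ_i^k`;
`δΩ(W_i, W_j, H_k) = ∂k_{jk}/∂w^i − ∂k_{ik}/∂w^j`.
Hence `δΩ = 0` on these triples if and only if `(k_{ij})` satisfies the reduced
Helmholtz conditions except non-degeneracy. -/
theorem IP_two_form_evaluations {n : ℕ}
    (C : Fin n → Fin n → Fin n → ℝ) (γ : Fin n → F n)
    (kc : Fin n → Fin n → F n)
    (hCskew : ∀ i j l, C i j l = - C j i l)
    (hCjac : ∀ i j k l,
      (∑ m, (C i j m * C m k l + C j k m * C m i l + C k i m * C m j l)) = 0)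
    (hγ : ∀ j, ContDiff ℝ (⊤ : ℕ∞) (γ j)) (hk : ∀ i j, ContDiff ℝ (⊤ : ℕ∞) (kc i j)) :
    (∀ i j z, d2 C (Om C γ kc) (Γ0 γ) (W i) (W j) z = kc i j z - kc j i z)
    ∧ (∀ i j z, d2 C (Om C γ kc) (Γ0 γ) (W i) (Hs C γ j) z
        = gamD γ (kc i j) z - (∑ k, kc k j z * lam C γ i k z)
            - ∑ k, kc i k z * lam C γ j k z)
    ∧ (∀ i j z, d2 C (Om C γ kc) (Γ0 γ) (Hs C γ i) (Hs C γ j) z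
        = ∑ k, (kc k i z * phi C γ j k z - kc k j z * phi C γ i k z))
    ∧ (∀ i j k z, d2 C (Om C γ kc) (W i) (W j) (Hs C γ k) z
        = Dw i (kc j k) z - Dw j (kc i k) z)
    ∧ (((∀ i j z, d2 C (Om C γ kc) (Γ0 γ) (W i) (W j) z = 0)
        ∧ (∀ i j z, d2 C (Om C γ kc) (Γ0 γ) (W i) (Hs C γ j) z = 0)
        ∧ (∀ i j z, d2 C (Om C γ kc) (Γ0 γ) (Hs C γ i) (Hs C γ j) z = 0)
        ∧ (∀ i j k z, d2 C (Om C γ kc) (W i) (W j) (Hs C γ k) z = 0))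
      ↔ ((∀ i j, kc i j = kc j i)
        ∧ (∀ i j z, gamD γ (kc i j) z - (∑ k, kc k j z * lam C γ i k z)
            - (∑ k, kc i k z * lam C γ j k z) = 0)
        ∧ (∀ i j z, (∑ k, kc k i z * phi C γ j k z)
            = ∑ k, kc k j z * phi C γ i k z)
        ∧ (∀ i j k z, Dw i (kc j k) z = Dw j (kc i k) z))) := by
  have e1 : ∀ i j (z : ℝ × (Fin n → ℝ)),
      d2 C (Om C γ kc) (Γ0 γ) (W i) (W j) z = kc i j z - kc j i z := by
    intro i j z
    simp only [d2]
    rw [Om_W_W, Om_G0_left, Om_G0_left, Dop_zero, Dop_zero, Dop_zero,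
      Om_G0_right_pt, Om_X_W, Om_X_W]
    rw [Finset.sum_congr rfl (fun b (_ : b ∈ Finset.univ) => by
        rw [Th_brGW] :
      ∀ b ∈ Finset.univ, kc j b z * Th b (br C (Γ0 γ) (W i)) z
        = kc j b z * -(if b = i then 1 else 0)),
      Finset.sum_congr rfl (fun b (_ : b ∈ Finset.univ) => by
        rw [Th_brGW] :
      ∀ b ∈ Finset.univ, kc i b z * Th b (br C (Γ0 γ) (W j)) z
        = kc i b z * -(if b = j then 1 else 0))]
    simp [mul_ite, mul_neg, Finset.sum_ite_eq']
    ring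
  have e2 : ∀ i j (z : ℝ × (Fin n → ℝ)),
      d2 C (Om C γ kc) (Γ0 γ) (W i) (Hs C γ j) z
        = gamD γ (kc i j) z - (∑ k, kc k j z * lam C γ i k z)
          - ∑ k, kc i k z * lam C γ j k z := by
    intro i j z
    simp only [d2]
    rw [Om_W_Hs, Om_G0_left, Om_G0_left, Dop_zero, Dop_zero,
      Om_G0_right_pt, Om_X_W, Om_X_Hs, Dop_G0 C γ hCskew]
    rw [Finset.sum_congr rfl (fun a (_ : a ∈ Finset.univ) => by
        rw [Psi_brGW] :
      ∀ a ∈ Finset.univ, kc a j z * Psi C γ a (br C (Γ0 γ) (W i)) z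
        = kc a j z * lam C γ i a z),
      Finset.sum_congr rfl (fun b (_ : b ∈ Finset.univ) => by
        rw [Th_brGH C γ hCskew] :
      ∀ b ∈ Finset.univ, kc i b z * Th b (br C (Γ0 γ) (Hs C γ j)) z
        = kc i b z * lam C γ j b z)]
    ring
  have e3 : ∀ i j (z : ℝ × (Fin n → ℝ)),
      d2 C (Om C γ kc) (Γ0 γ) (Hs C γ i) (Hs C γ j) z
        = ∑ k, (kc k i z * phi C γ j k z - kc k j z * phi C γ i k z) := by
    intro i j z
    simp only [d2]
    rw [Om_Hs_Hs, Om_G0_left, Om_G0_left, Dop_zero, Dop_zero, Dop_zero,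
      Om_G0_right_pt, Om_X_Hs, Om_X_Hs]
    rw [Finset.sum_congr rfl (fun a (_ : a ∈ Finset.univ) => by
        rw [Psi_brGH C γ hCskew] :
      ∀ a ∈ Finset.univ, kc a j z * Psi C γ a (br C (Γ0 γ) (Hs C γ i)) z
        = kc a j z * phi C γ i a z),
      Finset.sum_congr rfl (fun a (_ : a ∈ Finset.univ) => by
        rw [Psi_brGH C γ hCskew] :
      ∀ a ∈ Finset.univ, kc a i z * Psi C γ a (br C (Γ0 γ) (Hs C γ j)) z
        = kc a i z * phi C γ j a z)]
    rw [Finset.sum_sub_distrib]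
    ring
  have e4 : ∀ i j k (z : ℝ × (Fin n → ℝ)),
      d2 C (Om C γ kc) (W i) (W j) (Hs C γ k) z
        = Dw i (kc j k) z - Dw j (kc i k) z := by
    intro i j k z
    simp only [d2]
    rw [Om_W_Hs, Om_W_Hs, Om_W_W, Dop_zero, Dop_W, Dop_W, Om_X_Hs,
      Om_X_W, Om_X_W]
    rw [Finset.sum_congr rfl (fun a (_ : a ∈ Finset.univ) => by
        rw [Psi_brWW] :
      ∀ a ∈ Finset.univ, kc a k z * Psi C γ a (br C (W i) (W j)) z
        = kc a k z * 0),
      Finset.sum_congr rfl (fun b (_ : b ∈ Finset.univ) => by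
        rw [Th_brWH] :
      ∀ b ∈ Finset.univ, kc j b z * Th b (br C (W i) (Hs C γ k)) z
        = kc j b z * 0),
      Finset.sum_congr rfl (fun b (_ : b ∈ Finset.univ) => by
        rw [Th_brWH] :
      ∀ b ∈ Finset.univ, kc i b z * Th b (br C (W j) (Hs C γ k)) z
        = kc i b z * 0)]
    simp
  refine ⟨e1, e2, e3, e4, ?_⟩
  constructor
  · rintro ⟨h1, h2, h3, h4⟩
    refine ⟨?_, ?_, ?_, ?_⟩
    · intro i j
      funext z
      have := h1 i j z
      rw [e1 i j z] at this
      linarith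
    · intro i j z
      have := h2 i j z
      rw [e2 i j z] at this
      linarith
    · intro i j z
      have := h3 i j z
      rw [e3 i j z, Finset.sum_sub_distrib] at this
      linarith
    · intro i j k z
      have := h4 i j k z
      rw [e4 i j k z] at this
      linarith
  · rintro ⟨h1, h2, h3, h4⟩
    refine ⟨?_, ?_, ?_, ?_⟩
    · intro i j z
      rw [e1 i j z, h1 i j]
      ring
    · intro i j z
      rw [e2 i j z]
      exact h2 i j z
    · intro i j z
      rw [e3 i j z, Finset.sum_sub_distrib, h3 i j z]
      ring
    · intro i j k z
      rw [e4 i j k z, h4 i j k z]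
      ring
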